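/- Reading permissions are respected: if a network M_p^{r,w}[P] | s:(q→p:λ(v))·h reduces in one step to M̂_p^{r,w}[P'] | s:h, then either lev(v) ≤ r, or P' is not obtained by consuming the message q→p:λ(v) (i.e., the value v was not read by P). -/

import Mathlib

namespace MPS

/-! Process types and subtyping (Table 2 / Table 3 of the paper). -/

/-- Process (pre-)types: `end`, recursion variables, recursion, input prefixes
`p?λ(S).T`, output prefixes `q!λ(S).T`, intersections and unions.
Participants, labels and sorts are represented by natural numbers. -/
inductive PType : Type where
  | tEnd : PType
  | tVar : ℕ → PType
  | mu : PType → PType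
  | inp : ℕ → ℕ → ℕ → PType → PType   -- participant, label, sort, continuation
  | out : ℕ → ℕ → ℕ → PType → PType
  | inter : PType → PType → PType
  | union : PType → PType → PType
deriving DecidableEq

/-- The subtyping relation on process types: the least reflexive and transitive
relation closed under the rules of Table 3. -/
inductive Sub : PType → PType → Prop where
  | refl (T) : Sub T T
  | trans {T₁ T₂ T₃} : Sub T₁ T₂ → Sub T₂ T₃ → Sub T₁ T₃
  | endTop (T) : Sub T .tEnd
  | interL (T₁ T₂) : Sub (.inter T₁ T₂) T₁
  | interR (T₁ T₂) : Sub (.inter T₁ T₂) T₂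
  | unionL (T₁ T₂) : Sub T₁ (.union T₁ T₂)
  | unionR (T₁ T₂) : Sub T₂ (.union T₁ T₂)
  | inpCov {p l S T₁ T₂} : Sub T₁ T₂ → Sub (.inp p l S T₁) (.inp p l S T₂)
  | outCov {q l S T₁ T₂} : Sub T₁ T₂ → Sub (.out q l S T₁) (.out q l S T₂)
  | interGlb {T T₁ T₂} : Sub T T₁ → Sub T T₂ → Sub T (.inter T₁ T₂)
  | unionLub {T T₁ T₂} : Sub T₁ T → Sub T₂ T → Sub (.union T₁ T₂) T
  | distInter {T T₁ T₂ T₃} : Sub (.inter T₁ T₃) T → Sub (.inter T₂ T₃) T →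
      Sub (.inter (.union T₁ T₂) T₃) T
  | distUnion {T T₁ T₂ T₃} : Sub T (.union T₁ T₃) → Sub T (.union T₂ T₃) →
      Sub T (.union (.inter T₁ T₂) T₃)
  | muCov {T₁ T₂} : Sub T₁ T₂ → Sub (.mu T₁) (.mu T₂)

/-- `lin T`: labels of the topmost input prefixes of `T` (Table 1). -/
def lin : PType → Finset ℕ
  | .inp _ l _ _ => {l}
  | .inter T₁ T₂ => lin T₁ ∪ lin T₂
  | .union T₁ T₂ => lin T₁ ∪ lin T₂
  | _ => ∅

/-- `lout T`: labels of the topmost output prefixes of `T` (Table 1). -/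
def lout : PType → Finset ℕ
  | .out _ l _ _ => {l}
  | .inter T₁ T₂ => lout T₁ ∪ lout T₂
  | .union T₁ T₂ => lout T₁ ∪ lout T₂
  | _ => ∅

/-- A pre-type is a (process) type (Definition of process types) iff every
intersection has disjoint topmost input labels and disjoint topmost output
labels, and every union has no topmost input labels and disjoint topmost
output labels. -/
def WF : PType → Prop
  | .inter T₁ T₂ => WF T₁ ∧ WF T₂ ∧ lin T₁ ∩ lin T₂ = ∅ ∧ lout T₁ ∩ lout T₂ = ∅
  | .union T₁ T₂ => WF T₁ ∧ WF T₂ ∧ lin T₁ = ∅ ∧ lin T₂ = ∅ ∧ lout T₁ ∩ lout T₂ = ∅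
  | .inp _ _ _ T => WF T
  | .out _ _ _ T => WF T
  | .mu T => WF T
  | _ => True

/-! Monitors, their LTS, and the translation to process types. -/

/-- Monitors (local types): external-choice inputs `p?{λᵢ(Sᵢ).Mᵢ}`,
internal-choice outputs `q!{λᵢ(Sᵢ).Mᵢ}`, recursion, `end`.
A branch is a triple (label, sort, continuation). -/
inductive Monitor : Type where
  | mEnd : Monitor
  | mVar : ℕ → Monitor
  | mu : Monitor → Monitor
  | inp : ℕ → List (ℕ × ℕ × Monitor) → Monitor
  | out : ℕ → List (ℕ × ℕ × Monitor) → Monitor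

/-- Labels of the monitor LTS: `p?λ` and `q!λ`. -/
inductive MLabel : Type where
  | recv : ℕ → ℕ → MLabel
  | send : ℕ → ℕ → MLabel

/-- Monitor LTS: `p?{λᵢ(Sᵢ).Mᵢ} --p?λⱼ--> Mⱼ` and `q!{λᵢ(Sᵢ).Mᵢ} --q!λⱼ--> Mⱼ`. -/
inductive MStep : Monitor → MLabel → Monitor → Prop where
  | inp {p l S M' bs} : (l, S, M') ∈ bs → MStep (.inp p bs) (.recv p l) M'
  | out {q l S M' bs} : (l, S, M') ∈ bs → MStep (.out q bs) (.send q l) M'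

/-- Translation `⌊·⌋` of monitors into process types: intersection of the input
branches, union of the output branches. -/
def mt : Monitor → PType
  | .mEnd => .tEnd
  | .mVar t => .tVar t
  | .mu M => .mu (mt M)
  | .inp p bs =>
      (bs.attach.map (fun b => PType.inp p b.1.1 b.1.2.1 (mt b.1.2.2))).foldr .inter .tEnd
  | .out q bs =>
      (bs.attach.map (fun b => PType.out q b.1.1 b.1.2.1 (mt b.1.2.2))).foldr .union .tEnd
decreasing_by
  all_goals first
    | (obtain ⟨⟨l, S, M'⟩, hb⟩ := b
       have h1 := List.sizeOf_lt_of_mem hb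
       simp_wf
       simp only [Prod.mk.sizeOf_spec] at h1
       omega)
    | simp_wf

/-- Adequacy: a process type `T` is adequate for a monitor `M`, written
`T ∝ M`, iff `T ≤ ⌊M⌋`. -/
def Adequate (T : PType) (M : Monitor) : Prop := Sub T (mt M)

/-! Extended values, expressions, processes. -/

/-- Extended values: proper values or nonces. -/
inductive EVal : Type where
  | val : ℕ → EVal
  | nonce : ℕ → EVal
deriving DecidableEq

/-- The security level of an extended value, given the level assignment `lv`
on proper values; nonces have level `⊥`. -/
def lev {L : Type} [Bot L] (lv : ℕ → L) : EVal → L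
  | .val v => lv v
  | .nonce _ => ⊥

/-- Nonces have every sort; values have the sort given by `sortOf`. -/
def hasSort (sortOf : ℕ → ℕ) : EVal → ℕ → Prop
  | .val v, S => sortOf v = S
  | .nonce _, _ => True

/-- An (evaluated) expression: its sort, its resulting extended value, and its
security level. -/
structure Expr (L : Type) where
  sort : ℕ
  res : EVal
  lvl : L

/-- Processes: inaction, input `c?p,λ(x).P` (the binder is rendered by a
continuation function on extended values), output `c!q,λ(e).P`, conditional,
and external choice. -/
inductive Proc (L : Type) : Type where
  | nil : Proc L
  | recv : ℕ → ℕ → (EVal → Proc L) → Proc L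
  | send : ℕ → ℕ → Expr L → Proc L → Proc L
  | ite : Expr L → Proc L → Proc L → Proc L
  | sum : Proc L → Proc L → Proc L

/-- Labels of the process LTS: input `?λ(u)`, output `!λ(u)` (with the partner
recorded), and security levels `ℓ` of tested conditional expressions. -/
inductive PLabel (L : Type) : Type where
  | inp : ℕ → ℕ → EVal → PLabel L
  | out : ℕ → ℕ → EVal → PLabel L
  | lvl : L → PLabel L

/-- The LTS of processes (Table 4); `val 1` is `true` and `val 0` is `false`. -/
inductive PStep {L : Type} : Proc L → PLabel L → Proc L → Prop where
  | recv {p l cont u} : PStep (.recv p l cont) (.inp p l u) (cont u)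
  | send {q l e P u} : e.res = u → PStep (.send q l e P) (.out q l u) P
  | iteT {e P Q} : e.res = .val 1 → PStep (.ite e P Q) (.lvl e.lvl) P
  | iteF {e P Q} : e.res = .val 0 → PStep (.ite e P Q) (.lvl e.lvl) Q
  | sumL {P Q α P'} : (∀ ℓ, α ≠ .lvl ℓ) → PStep P α P' → PStep (.sum P Q) α P'
  | sumR {P Q α Q'} : (∀ ℓ, α ≠ .lvl ℓ) → PStep Q α Q' → PStep (.sum P Q) α Q'
  | sumLvlL {P Q ℓ P'} : PStep P (.lvl ℓ) P' → PStep (.sum P Q) (.lvl ℓ) (.sum P' Q)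
  | sumLvlR {P Q ℓ Q'} : PStep Q (.lvl ℓ) Q' → PStep (.sum P Q) (.lvl ℓ) (.sum P Q')

/-- The typing judgment for processes (Table 2); sort `0` plays the role of
`bool`. -/
inductive Typing {L : Type} (sortOf : ℕ → ℕ) : Proc L → PType → Prop where
  | nil : Typing sortOf .nil .tEnd
  | recv {p l S cont T} :
      (∀ u, hasSort sortOf u S → Typing sortOf (cont u) T) →
      Typing sortOf (.recv p l cont) (.inp p l S T)
  | send {q l : ℕ} {e : Expr L} {P T} : Typing sortOf P T →
      Typing sortOf (.send q l e P) (.out q l e.sort T)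
  | ite {e : Expr L} {P Q T₁ T₂} : e.sort = 0 →
      Typing sortOf P T₁ → Typing sortOf Q T₂ → WF (.union T₁ T₂) →
      Typing sortOf (.ite e P Q) (.union T₁ T₂)
  | sum {P Q T₁ T₂} : Typing sortOf P T₁ → Typing sortOf Q T₂ → WF (.inter T₁ T₂) →
      Typing sortOf (.sum P Q) (.inter T₁ T₂)

/-! Networks: monitored processes, queues, and the reduction rules. -/

/-- A message `p → q : λ(u)` in a session queue. -/
structure Msg : Type where
  sender : ℕ
  receiver : ℕ
  lbl : ℕ
  content : EVal
deriving DecidableEq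

/-- A session queue. -/
abbrev Queue : Type := List Msg

/-- A monitored process `M^{r,w}[P]`: a monitor together with its reading
permission `r`, writing permission `w` and controlled process. -/
structure MProc (L : Type) where
  mon : Monitor
  r : L
  w : L
  proc : Proc L

/-- A (single-session) network: an assignment of monitored processes to
participants, together with the session queue. -/
abbrev Net (L : Type) : Type := (ℕ → Option (MProc L)) × Queue

/-- Update the participant assignment at `p`. -/
def updateNet {L : Type} (f : ℕ → Option (MProc L)) (p : ℕ) (m : MProc L) :
    ℕ → Option (MProc L) :=
  fun q => if q = p then some m else f q

/-- Names of the network reduction rules of Table 5. -/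
inductive Rule : Type where
  | upLev | inR | outR | inGlob | outGlob | inLoc | outLoc | refresh
deriving DecidableEq

/-- The monitored reduction of networks (Table 5), tagged with the rule used.
`lv` assigns security levels to values, `sortOf` sorts to values. -/
inductive Red {L : Type} [Lattice L] [BoundedOrder L] (lv : ℕ → L) (sortOf : ℕ → ℕ) :
    Net L → Rule → Net L → Prop where
  | upLev {f : ℕ → Option (MProc L)} {h : Queue} {p : ℕ} {M : Monitor} {r w ℓ : L}
      {P P' : Proc L} :
      f p = some ⟨M, r, w, P⟩ → PStep P (.lvl ℓ) P' →
      Red lv sortOf (f, h) .upLev (updateNet f p ⟨M, r, w ⊔ ℓ, P'⟩, h)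
  | inR {f : ℕ → Option (MProc L)} {h : Queue} {p q l : ℕ} {u : EVal} {M M' : Monitor}
      {r w : L} {P P' : Proc L} :
      f p = some ⟨M, r, w, P⟩ → MStep M (.recv q l) M' →
      PStep P (.inp q l u) P' → lev lv u ≤ r →
      Red lv sortOf (f, ⟨q, p, l, u⟩ :: h) .inR (updateNet f p ⟨M', r, w, P'⟩, h)
  | outR {f : ℕ → Option (MProc L)} {h : Queue} {p q l : ℕ} {u : EVal} {M M' : Monitor}
      {r w : L} {P P' : Proc L} :
      f p = some ⟨M, r, w, P⟩ → MStep M (.send q l) M' →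
      PStep P (.out q l u) P' →
      ((∃ i, u = .nonce i) ∨ (∃ v, u = .val v ∧ w ≤ lv v)) →
      Red lv sortOf (f, h) .outR (updateNet f p ⟨M', r, w, P'⟩, h ++ [⟨p, q, l, u⟩])
  | inGlob {f : ℕ → Option (MProc L)} {h : Queue} {p q l v i : ℕ} {M M' : Monitor}
      {r w : L} {P P' : Proc L} :
      f p = some ⟨M, r, w, P⟩ → MStep M (.recv q l) M' →
      PStep P (.inp q l (.nonce i)) P' → ¬ lv v ≤ r →
      Red lv sortOf (f, ⟨q, p, l, .val v⟩ :: h) .inGlob (updateNet f p ⟨M', r, w, P'⟩, h)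
  | outGlob {f : ℕ → Option (MProc L)} {h : Queue} {p q l v i : ℕ} {M M' Mq : Monitor}
      {r w r' w' : L} {P P' Q : Proc L} :
      p ≠ q → f p = some ⟨M, r, w, P⟩ → f q = some ⟨Mq, r', w', Q⟩ →
      MStep M (.send q l) M' → PStep P (.out q l (.val v)) P' → ¬ w ≤ lv v →
      Red lv sortOf (f, h) .outGlob
        (updateNet f p ⟨M', r ⊓ r', w, P'⟩, h ++ [⟨p, q, l, .nonce i⟩])
  | inLoc {f : ℕ → Option (MProc L)} {h : Queue} {p q l v : ℕ} {M M' : Monitor}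
      {r w : L} {P P' : Proc L} {T : PType} :
      f p = some ⟨M, r, w, P⟩ → MStep M (.recv q l) M' →
      Typing sortOf P' T → Adequate T M' → ¬ lv v ≤ r →
      Red lv sortOf (f, ⟨q, p, l, .val v⟩ :: h) .inLoc (updateNet f p ⟨M', r, w, P'⟩, h)
  | outLoc {f : ℕ → Option (MProc L)} {h : Queue} {p q l v S : ℕ} {M M' Mq' : Monitor}
      {bs : List (ℕ × ℕ × Monitor)} {r w r' w' : L} {P P' Q Q' : Proc L} {T : PType} :
      p ≠ q → f p = some ⟨M, r, w, P⟩ → f q = some ⟨.inp p bs, r', w', Q⟩ →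
      MStep M (.send q l) M' → PStep P (.out q l (.val v)) P' →
      (l, S, Mq') ∈ bs → Typing sortOf Q' T → Adequate T Mq' → ¬ w ≤ lv v →
      Red lv sortOf (f, h) .outLoc
        (updateNet (updateNet f p ⟨M', r ⊓ r', w, P'⟩) q ⟨Mq', r', w', Q'⟩, h)
  | refresh {f f' : ℕ → Option (MProc L)} {h : Queue} {Aff : Finset ℕ} :
      (∀ p ∉ Aff, f' p = f p) → (∀ p ∈ Aff, f' p = none) →
      Red lv sortOf (f, h) .refresh
        (f', h.filter (fun m => decide (m.sender ∉ Aff ∧ m.receiver ∉ Aff)))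

/-- One-step network reduction by some rule. -/
def RedAny {L : Type} [Lattice L] [BoundedOrder L] (lv : ℕ → L) (sortOf : ℕ → ℕ)
    (n n' : Net L) : Prop := ∃ ρ, Red lv sortOf n ρ n'

/-- The output check of rule Out: `u` is a nonce, or a value of level at least
the writing permission `w`. -/
def OutCheck {L : Type} [Lattice L] [BoundedOrder L] (lv : ℕ → L) (w : L) (u : EVal) : Prop :=
  (∃ i, u = EVal.nonce i) ∨ (∃ v, u = EVal.val v ∧ w ≤ lv v)

/-- Structural equivalence of queues: generated by swapping adjacent messages
with different senders or different receivers. -/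
inductive QEquiv : Queue → Queue → Prop where
  | refl (h) : QEquiv h h
  | symm {h h'} : QEquiv h h' → QEquiv h' h
  | trans {h₁ h₂ h₃} : QEquiv h₁ h₂ → QEquiv h₂ h₃ → QEquiv h₁ h₃
  | swap {h₁ h₂ : Queue} {m m' : Msg} :
      (m.sender ≠ m'.sender ∨ m.receiver ≠ m'.receiver) →
      QEquiv (h₁ ++ m :: m' :: h₂) (h₁ ++ m' :: m :: h₂)

theorem Red.lev_content_le_of_inR {L : Type} [Lattice L] [BoundedOrder L] {lv : ℕ → L}
    {sortOf : ℕ → ℕ} {f : ℕ → Option (MProc L)} {m : Msg} {h : Queue} {n' : Net L}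
    {mp : MProc L} (hred : Red lv sortOf (f, m :: h) .inR n')
    (hreceiver : f m.receiver = some mp) :
    lev lv m.content ≤ mp.r := by
  cases hred with
  | inR hfp _ _ hlev =>
    obtain rfl := Option.some_injective _ (hreceiver.symm.trans hfp)
    exact hlev

theorem reading_permissions_respected_general {L : Type} [Lattice L] [BoundedOrder L]
    {lv : ℕ → L} {sortOf : ℕ → ℕ}
    {f f' : ℕ → Option (MProc L)} {h : Queue} {ρ : Rule} {p q l v : ℕ}
    {M : Monitor} {r w : L} {P : Proc L}
    (hred : Red lv sortOf (f, ⟨q, p, l, .val v⟩ :: h) ρ (f', h))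
    (hp : f p = some ⟨M, r, w, P⟩) :
    lv v ≤ r ∨ ρ ≠ .inR := by
  by_cases hρ : ρ = .inR
  · subst hρ
    exact .inl (hred.lev_content_le_of_inR hp)
  · exact .inr hρ

/-- reading permissions are respected: if
`M_p^{r,w}[P] | s:(q→p:λ(v))·h` reduces in one step to `M̂_p^{r,w}[P'] | s:h`,
then either `lev(v) ≤ r`, or `P'` is not obtained by consuming the message
(i.e. the step is not an instance of rule In). -/
theorem reading_permissions_respected {L : Type} [Lattice L] [BoundedOrder L] [Fintype L]
    {lv : ℕ → L} {sortOf : ℕ → ℕ}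
    {f f' : ℕ → Option (MProc L)} {h : Queue} {ρ : Rule} {p q l v : ℕ}
    {M M' : Monitor} {r w : L} {P P' : Proc L}
    (hred : Red lv sortOf (f, ⟨q, p, l, .val v⟩ :: h) ρ (f', h))
    (hp : f p = some ⟨M, r, w, P⟩) (hp' : f' p = some ⟨M', r, w, P'⟩) :
    lv v ≤ r ∨ ρ ≠ .inR :=
  reading_permissions_respected_general hred hp

end MPS
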